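/- Let A ⊆ Θ be a measurable set such that the set of densities {p_θ : θ ∈ A} is convex and closed in L¹(μ), let 0 < α < 1, and let c ≥ 0 be such that inf_{θ ∈ A} [−log ∫ (p_θ(x)/p*(x))^α p₀(x) dμ(x)] ≥ c. Suppose 0 < ∫_A R_n(θ) dΠ(θ) < ∞ (for a fixed realization of X₁, …, X_n), and define the predictive density p_{nA}(x) = ∫_A p_θ(x) R_n(θ) dΠ(θ) / ∫_A R_n(θ) dΠ(θ). Then p_{nA} belongs (as an element of L¹(μ)) to {p_θ : θ ∈ A}, and consequently ∫ (p_{nA}(x)/p*(x))^α p₀(x) dμ(x) ≤ e^{−c}. -/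

import Mathlib

/-!
The predictive density is the mean `x ↦ ∫ p_θ(x) dρ(θ)` under the posterior `ρ` normalized on `A`,
a probability measure carried by `A`. Approximate `(θ, x) ↦ p_θ(x)` in `L¹(ρ ⊗ μ)` by a function
that, in `θ`, is constant on the cells of a finite measurable partition, and in each cell pick a
point of `A` whose `L¹(μ)` distance to the value on the cell is at most its `ρ`-average there. The
resulting convex combinations of densities from `A` converge to the mean in `L¹(μ)`, so by
convexity and closedness the mean is itself some `p_θ` with `θ ∈ A`, and the bound assumed on `A`
applies to it.
-/

open MeasureTheory ProbabilityTheory Filter Real Set Topology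
open scoped ENNReal NNReal

noncomputable section

variable {X : Type*} {Θ : Type*}

/-- The likelihood ratio `R_n(θ) = ∏_{i=1}^n p_θ(x_i)/p*(x_i)` along the sample path `xs`. -/
def LR (p : Θ → X → ℝ) (θstar : Θ) (xs : ℕ → X) (n : ℕ) (θ : Θ) : ℝ :=
  ∏ i ∈ Finset.range n, p θ (xs i) / p θstar (xs i)

/-- The posterior mass `Πⁿ(B) = ∫_B R_n dΠ / ∫_Θ R_n dΠ` given the sample path `xs`. -/
def post [MeasurableSpace Θ] (Pri : Measure Θ) (p : Θ → X → ℝ) (θstar : Θ)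
    (xs : ℕ → X) (n : ℕ) (B : Set Θ) : ℝ :=
  (∫ θ in B, LR p θstar xs n θ ∂Pri) / ∫ θ, LR p θstar xs n θ ∂Pri

/-- The predictive density on `A`: `p_{nA}(x) = ∫_A p_θ(x) R_n(θ) dΠ / ∫_A R_n(θ) dΠ`. -/
def predDens [MeasurableSpace Θ] (Pri : Measure Θ) (p : Θ → X → ℝ) (θstar : Θ)
    (xs : ℕ → X) (n : ℕ) (A : Set Θ) (x : X) : ℝ :=
  (∫ θ in A, p θ x * LR p θstar xs n θ ∂Pri) / ∫ θ in A, LR p θstar xs n θ ∂Pri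

/-- The Kullback–Leibler neighborhood `B(ε, θ*; P₀)`. -/
def KLnbhd [MeasurableSpace X] (μ : Measure X) (p : Θ → X → ℝ) (p₀ : X → ℝ)
    (θstar : Θ) (ε : ℝ) : Set Θ :=
  {θ | ∫ x, Real.log (p θstar x / p θ x) * p₀ x ∂μ ≤ ε ^ 2 ∧
       ∫ x, (Real.log (p θstar x / p θ x)) ^ 2 * p₀ x ∂μ ≤ ε ^ 2}

/-- The set of densities `{p_θ : θ ∈ A}` is convex (as a subset of L¹(μ)). -/
def ConvexDens [MeasurableSpace X] (μ : Measure X) (p : Θ → X → ℝ) (A : Set Θ) : Prop :=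
  ∀ θ₁ ∈ A, ∀ θ₂ ∈ A, ∀ t : ℝ, 0 ≤ t → t ≤ 1 →
    ∃ θ ∈ A, (fun x => t * p θ₁ x + (1 - t) * p θ₂ x) =ᵐ[μ] p θ

/-- The set of densities `{p_θ : θ ∈ A}` is closed in L¹(μ): any integrable function that can be
approximated arbitrarily well in L¹ by densities from `A` coincides a.e. with a density from `A`. -/
def ClosedDens [MeasurableSpace X] (μ : Measure X) (p : Θ → X → ℝ) (A : Set Θ) : Prop :=
  ∀ f : X → ℝ, Integrable f μ →
    (∀ ε > 0, ∃ θ ∈ A, ∫ x, |f x - p θ x| ∂μ < ε) → ∃ θ ∈ A, f =ᵐ[μ] p θ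

lemma ConvexDens.convex [MeasurableSpace X] {μ : Measure X} {p : Θ → X → ℝ} {A : Set Θ}
    (h : ConvexDens μ p A) :
    Convex ℝ {f : X → ℝ | ∃ θ ∈ A, f =ᵐ[μ] p θ} := by
  rintro f ⟨θ₁, hθ₁, hf⟩ g ⟨θ₂, hθ₂, hg⟩ a b ha hb hab
  obtain ⟨θ, hθ, hmix⟩ := h θ₁ hθ₁ θ₂ hθ₂ a ha (by linarith)
  refine ⟨θ, hθ, ?_⟩
  filter_upwards [hf, hg, hmix] with x hfx hgx hx
  simp only [Pi.add_apply, Pi.smul_apply, smul_eq_mul, hfx, hgx, ← hx, ← hab, add_sub_cancel_left]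

section StepKernel

variable [MeasurableSpace X] [MeasurableSpace Θ]

def IsStepKernel (g : Θ × X → ℝ) : Prop :=
  ∃ (ι : Type) (_ : Fintype ι) (_ : MeasurableSpace ι) (_ : MeasurableSingletonClass ι)
    (cell : Θ → ι) (h : ι → X → ℝ), Measurable cell ∧ (∀ i, Measurable (h i)) ∧
      g = fun z => h (cell z.1) z.2

namespace IsStepKernel

lemma measurable {g : Θ × X → ℝ} (hg : IsStepKernel g) : Measurable g := by
  obtain ⟨ι, _, _, _, cell, h, hcell, hh, rfl⟩ := hg
  have : Measurable fun w : ι × X => h w.1 w.2 := measurable_from_prod_countable_right hh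
  exact this.comp ((hcell.comp measurable_fst).prodMk measurable_snd)

lemma comp₂ {g₁ g₂ : Θ × X → ℝ} (h₁ : IsStepKernel g₁) (h₂ : IsStepKernel g₂)
    {F : ℝ → ℝ → ℝ} (hF : Measurable (Function.uncurry F)) :
    IsStepKernel fun z => F (g₁ z) (g₂ z) := by
  obtain ⟨ι, _, _, _, cell, h, hcell, hh, rfl⟩ := h₁
  obtain ⟨ι', _, _, _, cell', h', hcell', hh', rfl⟩ := h₂
  exact ⟨ι × ι', inferInstance, inferInstance, inferInstance, fun θ => (cell θ, cell' θ),
    fun i x => F (h i.1 x) (h' i.2 x), hcell.prodMk hcell',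
    fun i => hF.comp ((hh i.1).prodMk (hh' i.2)), rfl⟩

lemma comp {g : Θ × X → ℝ} (hg : IsStepKernel g) {F : ℝ → ℝ} (hF : Measurable F) :
    IsStepKernel fun z => F (g z) := by
  obtain ⟨ι, _, _, _, cell, h, hcell, hh, rfl⟩ := hg
  exact ⟨ι, inferInstance, inferInstance, inferInstance, cell, fun i x => F (h i x), hcell,
    fun i => hF.comp (hh i), rfl⟩

lemma indicator_prod {U : Set Θ} {V : Set X} (hU : MeasurableSet U) (hV : MeasurableSet V) :
    IsStepKernel ((U ×ˢ V).indicator 1) := by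
  classical
  refine ⟨Bool, inferInstance, inferInstance, inferInstance, fun θ => decide (θ ∈ U),
    fun b => if b then V.indicator 1 else 0, measurable_to_countable' fun b => ?_,
    fun b => ?_, ?_⟩
  · cases b
    · convert hU.compl using 1; ext θ; simp
    · convert hU using 1; ext θ; simp
  · cases b
    · exact measurable_const
    · exact measurable_one.indicator hV
  · ext ⟨θ, x⟩
    by_cases hθ : θ ∈ U <;> simp [Set.indicator, hθ]

lemma indicator_of_mem_generateSetAlgebra {t : Set (Θ × X)}
    (ht : t ∈ generateSetAlgebra
      (Set.image2 (· ×ˢ ·) {s : Set Θ | MeasurableSet s} {u : Set X | MeasurableSet u})) :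
    IsStepKernel (t.indicator 1) := by
  induction ht with
  | base s hs =>
    obtain ⟨U, hU, V, hV, rfl⟩ := hs
    exact indicator_prod hU hV
  | empty =>
    simpa using (indicator_prod (X := X) MeasurableSet.empty MeasurableSet.empty)
  | compl s _ ih =>
    convert ih.comp (F := fun a => 1 - a) (by fun_prop) using 1
    ext z
    by_cases hz : z ∈ s <;> simp [Set.indicator, hz]
  | union s u _ _ ihs ihu =>
    convert ihs.comp₂ ihu (F := max) measurable_sup using 1
    ext z
    by_cases hzs : z ∈ s <;> by_cases hzu : z ∈ u <;> simp [Set.indicator, hzs, hzu]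

end IsStepKernel

end StepKernel

section Density

open symmDiff

variable [MeasurableSpace X] [MeasurableSpace Θ]

lemma exists_isStepKernel_lintegral_edist_indicator_le {ν : Measure Θ} {μ : Measure X}
    [SigmaFinite ν] [SigmaFinite μ] (c : ℝ) {s : Set (Θ × X)} (hs : MeasurableSet s)
    (hνs : (ν.prod μ) s < ∞) {ε : ℝ} (hε : 0 < ε) :
    ∃ g, IsStepKernel g ∧
      ∫⁻ z, edist (s.indicator (fun _ => c) z) (g z) ∂(ν.prod μ) ≤ ENNReal.ofReal ε := by
  have hdense : (ν.prod μ).MeasureDense (generateSetAlgebra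
      (Set.image2 (· ×ˢ ·) {s : Set Θ | MeasurableSet s} {u : Set X | MeasurableSet u})) :=
    .of_generateFrom_isSetAlgebra_sigmaFinite isSetAlgebra_generateSetAlgebra
      ((ν.toFiniteSpanningSetsIn.prod μ.toFiniteSpanningSetsIn).mono
        self_subset_generateSetAlgebra)
      (by rw [generateFrom_generateSetAlgebra_eq, generateFrom_prod])
  obtain ⟨t, ht, -, hst⟩ := hdense.fin_meas_approx hs hνs.ne (ε / (‖c‖ + 1)) (by positivity)
  refine ⟨fun z => c * t.indicator 1 z,
    (IsStepKernel.indicator_of_mem_generateSetAlgebra ht).comp (measurable_const_mul c), ?_⟩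
  have hedist : ∀ z, edist (s.indicator (fun _ => c) z) (c * t.indicator 1 z) =
      (s ∆ t).indicator (fun _ => ‖c‖ₑ) z := fun z => by
    by_cases hzs : z ∈ s <;> by_cases hzt : z ∈ t <;>
      simp [Set.indicator, Set.mem_symmDiff, hzs, hzt, edist_eq_enorm_sub]
  calc ∫⁻ z, edist (s.indicator (fun _ => c) z) (c * t.indicator 1 z) ∂(ν.prod μ)
      = ‖c‖ₑ * (ν.prod μ) (s ∆ t) := by
        simp_rw [hedist]
        exact lintegral_indicator_const (hs.symmDiff (hdense.measurable t ht)) _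
    _ ≤ ENNReal.ofReal (‖c‖ + 1) * ENNReal.ofReal (ε / (‖c‖ + 1)) := by
        rw [← ofReal_norm]
        gcongr
        linarith
    _ = ENNReal.ofReal ε := by
        rw [← ENNReal.ofReal_mul (by positivity), mul_div_cancel₀ _ (by positivity)]

lemma exists_isStepKernel_lintegral_edist_le {ν : Measure Θ} {μ : Measure X} [SigmaFinite ν]
    [SigmaFinite μ] {f : Θ × X → ℝ} (hf : Integrable f (ν.prod μ)) {ε : ℝ} (hε : 0 < ε) :
    ∃ g, IsStepKernel g ∧ ∫⁻ z, edist (f z) (g z) ∂(ν.prod μ) ≤ ENNReal.ofReal ε := by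
  have halves {δ : ℝ} (hδ : 0 < δ) :
      ENNReal.ofReal (δ / 2) + ENNReal.ofReal (δ / 2) = ENNReal.ofReal δ := by
    rw [← ENNReal.ofReal_add (by positivity) (by positivity), add_halves]
  refine Integrable.induction (P := fun f => ∀ ε : ℝ, 0 < ε → ∃ g, IsStepKernel g ∧
    ∫⁻ z, edist (f z) (g z) ∂(ν.prod μ) ≤ ENNReal.ofReal ε) ?_ ?_ ?_ ?_ hf ε hε
  · exact fun c s hs hνs _ hε => exists_isStepKernel_lintegral_edist_indicator_le c hs hνs hε
  · intro f g _ hf hg hPf hPg ε hε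
    obtain ⟨gf, hgf, hfgf⟩ := hPf (ε / 2) (half_pos hε)
    obtain ⟨gg, hgg, hggg⟩ := hPg (ε / 2) (half_pos hε)
    refine ⟨fun z => gf z + gg z, hgf.comp₂ hgg measurable_add, ?_⟩
    calc ∫⁻ z, edist ((f + g) z) (gf z + gg z) ∂(ν.prod μ)
        ≤ ∫⁻ z, (edist (f z) (gf z) + edist (g z) (gg z)) ∂(ν.prod μ) :=
          lintegral_mono fun z => edist_add_add_le _ _ _ _
      _ = ∫⁻ z, edist (f z) (gf z) ∂(ν.prod μ) + ∫⁻ z, edist (g z) (gg z) ∂(ν.prod μ) :=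
          lintegral_add_left' (hf.aestronglyMeasurable.edist
            hgf.measurable.aestronglyMeasurable) _
      _ ≤ ENNReal.ofReal ε := halves hε ▸ add_le_add hfgf hggg
  · refine isClosed_of_closure_subset fun f hf ε hε => ?_
    obtain ⟨f', hf', hff'⟩ := EMetric.mem_closure_iff.1 hf (ENNReal.ofReal (ε / 2)) (by positivity)
    obtain ⟨g, hg, hf'g⟩ := hf' (ε / 2) (half_pos hε)
    refine ⟨g, hg, ?_⟩
    have hdist : ∫⁻ z, edist (f z) (f' z) ∂(ν.prod μ) = edist f f' := by
      rw [Lp.edist_def, eLpNorm_one_eq_lintegral_enorm]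
      simp only [Pi.sub_apply, edist_eq_enorm_sub]
    calc ∫⁻ z, edist (f z) (g z) ∂(ν.prod μ)
        ≤ ∫⁻ z, edist (f z) (f' z) ∂(ν.prod μ) + ∫⁻ z, edist (g z) (f' z) ∂(ν.prod μ) :=
          lintegral_edist_triangle (Lp.aestronglyMeasurable f) (Lp.aestronglyMeasurable f')
      _ ≤ ENNReal.ofReal ε := by
          simp_rw [edist_comm (g _)]
          rw [hdist, ← halves hε]
          exact add_le_add hff'.le hf'g
  · intro f g hfg _ hPf ε hε
    obtain ⟨h, hh, hfh⟩ := hPf ε hε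
    refine ⟨h, hh, (lintegral_congr_ae ?_).trans_le hfh⟩
    filter_upwards [hfg] with z hz
    rw [hz]

end Density

section Averaging

variable [MeasurableSpace Θ] {ρ : Measure Θ} {ι : Type*} [Fintype ι] [MeasurableSpace ι]
  [MeasurableSingletonClass ι] {cell : Θ → ι}

lemma lintegral_eq_sum_setLIntegral_fiber (hcell : Measurable cell) (G : Θ → ℝ≥0∞) :
    ∫⁻ σ, G σ ∂ρ = ∑ i, ∫⁻ σ in cell ⁻¹' {i}, G σ ∂ρ := by
  have hcover : ⋃ i, cell ⁻¹' {i} = Set.univ := by ext σ; simp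
  calc ∫⁻ σ, G σ ∂ρ = ∫⁻ σ in ⋃ i, cell ⁻¹' {i}, G σ ∂ρ := by rw [hcover, Measure.restrict_univ]
    _ = ∑' i, ∫⁻ σ in cell ⁻¹' {i}, G σ ∂ρ :=
        lintegral_iUnion (fun i => hcell (measurableSet_singleton i))
          (pairwise_disjoint_fiber cell) _
    _ = ∑ i, ∫⁻ σ in cell ⁻¹' {i}, G σ ∂ρ := tsum_fintype _

lemma exists_mem_lintegral_comp_le [IsFiniteMeasure ρ] [NeZero ρ] {A : Set Θ}
    (hA : ∀ᵐ θ ∂ρ, θ ∈ A) (hcell : Measurable cell) {K : ι → Θ → ℝ≥0∞}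
    (hK : ∀ i, AEMeasurable (K i) ρ) :
    ∃ θs : ι → Θ, (∀ i, θs i ∈ A) ∧
      ∫⁻ σ, K (cell σ) (θs (cell σ)) ∂ρ ≤ ∫⁻ σ, K (cell σ) σ ∂ρ := by
  have hsel (i : ι) : ∃ θ ∈ A, ρ (cell ⁻¹' {i}) * K i θ ≤ ∫⁻ σ in cell ⁻¹' {i}, K i σ ∂ρ := by
    by_cases h0 : ρ (cell ⁻¹' {i}) = 0
    · obtain ⟨θ, hθ⟩ := hA.exists
      exact ⟨θ, hθ, by simp [h0]⟩
    obtain ⟨θ, hθA, hθ⟩ := exists_notMem_null_le_laverage (μ := ρ.restrict (cell ⁻¹' {i}))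
      (by rwa [Ne, Measure.restrict_eq_zero]) (hK i).restrict
      (ae_iff.1 (ae_restrict_of_ae hA))
    refine ⟨θ, not_not.1 hθA, ?_⟩
    rw [setLAverage_eq] at hθ
    calc ρ (cell ⁻¹' {i}) * K i θ
        ≤ ρ (cell ⁻¹' {i}) * ((∫⁻ σ in cell ⁻¹' {i}, K i σ ∂ρ) / ρ (cell ⁻¹' {i})) := by gcongr
      _ = ∫⁻ σ in cell ⁻¹' {i}, K i σ ∂ρ := ENNReal.mul_div_cancel h0 (measure_ne_top _ _)
  choose θs hθsA hθs using hsel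
  refine ⟨θs, hθsA, ?_⟩
  rw [lintegral_eq_sum_setLIntegral_fiber hcell, lintegral_eq_sum_setLIntegral_fiber hcell]
  refine Finset.sum_le_sum fun i _ => ?_
  have hfib : MeasurableSet (cell ⁻¹' {i}) := hcell (measurableSet_singleton i)
  calc ∫⁻ σ in cell ⁻¹' {i}, K (cell σ) (θs (cell σ)) ∂ρ = ρ (cell ⁻¹' {i}) * K i (θs i) := by
        rw [setLIntegral_congr_fun hfib (fun σ (hσ : cell σ = i) => by rw [hσ]),
          setLIntegral_const, mul_comm]
    _ ≤ ∫⁻ σ in cell ⁻¹' {i}, K i σ ∂ρ := hθs i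
    _ = ∫⁻ σ in cell ⁻¹' {i}, K (cell σ) σ ∂ρ :=
        setLIntegral_congr_fun hfib fun σ (hσ : cell σ = i) => by rw [hσ]

lemma edist_integral_sum_le {E : Type*} [NormedAddCommGroup E] [NormedSpace ℝ E]
    [CompleteSpace E] [IsFiniteMeasure ρ] (hcell : Measurable cell) (θs : ι → Θ) {f : Θ → E}
    (hf : Integrable f ρ) :
    edist (∫ σ, f σ ∂ρ) (∑ i, ρ.real (cell ⁻¹' {i}) • f (θs i)) ≤
      ∫⁻ σ, edist (f σ) (f (θs (cell σ))) ∂ρ := by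
  have hstep : Integrable (fun σ => f (θs (cell σ))) ρ :=
    (Integrable.of_finite (μ := ρ.map cell) (f := fun i => f (θs i))).comp_measurable hcell
  have hsum : ∑ i, ρ.real (cell ⁻¹' {i}) • f (θs i) = ∫ σ, f (θs (cell σ)) ∂ρ := by
    rw [← integral_map (f := fun i => f (θs i)) hcell.aemeasurable
      Integrable.of_finite.aestronglyMeasurable,
      integral_fintype Integrable.of_finite]
    simp [map_measureReal_apply hcell (measurableSet_singleton _)]
  rw [hsum, edist_eq_enorm_sub, ← integral_sub hf hstep]
  simpa only [edist_eq_enorm_sub] using enorm_integral_le_lintegral_enorm _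

end Averaging

section Approximation

variable [MeasurableSpace X] [MeasurableSpace Θ] {μ : Measure X} [SigmaFinite μ]
  {ρ : Measure Θ} [IsProbabilityMeasure ρ] {p : Θ → X → ℝ} {A : Set Θ}

lemma exists_sum_lintegral_edist_integral_le (hA : ∀ᵐ θ ∂ρ, θ ∈ A)
    (hp : Measurable (Function.uncurry p)) (hpint : Integrable (Function.uncurry p) (ρ.prod μ))
    {ε : ℝ} (hε : 0 < ε) :
    ∃ (ι : Type) (_ : Fintype ι) (w : ι → ℝ) (θs : ι → Θ), (∀ i, 0 ≤ w i) ∧ ∑ i, w i = 1 ∧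
      (∀ i, θs i ∈ A) ∧
      ∫⁻ x, edist (∫ θ, p θ x ∂ρ) ((∑ i, w i • p (θs i)) x) ∂μ ≤ ENNReal.ofReal ε := by
  have hpσ (σ : Θ) : Measurable (p σ) := hp.comp measurable_prodMk_left
  obtain ⟨g, hg, hpg⟩ := exists_isStepKernel_lintegral_edist_le hpint (half_pos hε)
  have hgmeas := hg.measurable
  obtain ⟨ι, _, _, _, cell, h, hcell, hh, rfl⟩ := hg
  have hKmeas (i : ι) : Measurable fun θ => ∫⁻ x, edist (h i x) (p θ x) ∂μ :=
    (((hh i).comp measurable_snd).edist hp).lintegral_prod_right'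
  obtain ⟨θs, hθsA, hθs⟩ := exists_mem_lintegral_comp_le hA hcell (hKmeas · |>.aemeasurable)
  have hpθs : Measurable fun z : Θ × X => p (θs (cell z.1)) z.2 :=
    hp.comp (((measurable_of_countable θs).comp (hcell.comp measurable_fst)).prodMk
      measurable_snd)
  have hE : ∫⁻ σ, ∫⁻ x, edist (p σ x) (h (cell σ) x) ∂μ ∂ρ ≤ ENNReal.ofReal (ε / 2) :=
    (lintegral_prod _ (hp.edist hgmeas).aemeasurable).symm.trans_le hpg
  refine ⟨ι, inferInstance, fun i => ρ.real (cell ⁻¹' {i}), θs, fun i => measureReal_nonneg,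
    ?_, hθsA, ?_⟩
  · rw [sum_measureReal_preimage_singleton _ fun i _ => hcell (measurableSet_singleton i)]
    simp
  calc ∫⁻ x, edist (∫ θ, p θ x ∂ρ) ((∑ i, ρ.real (cell ⁻¹' {i}) • p (θs i)) x) ∂μ
      ≤ ∫⁻ x, ∫⁻ σ, edist (p σ x) (p (θs (cell σ)) x) ∂ρ ∂μ := by
        refine lintegral_mono_ae ?_
        filter_upwards [hpint.prod_left_ae] with x hx
        rw [Finset.sum_apply]
        exact edist_integral_sum_le hcell θs hx
    _ = ∫⁻ σ, ∫⁻ x, edist (p σ x) (p (θs (cell σ)) x) ∂μ ∂ρ :=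
        lintegral_lintegral_swap ((hp.edist hpθs).comp measurable_swap).aemeasurable
    _ ≤ ∫⁻ σ, (∫⁻ x, edist (p σ x) (h (cell σ) x) ∂μ +
          ∫⁻ x, edist (h (cell σ) x) (p (θs (cell σ)) x) ∂μ) ∂ρ := by
        refine lintegral_mono fun σ => ?_
        rw [← lintegral_add_left ((hpσ σ).edist (hh (cell σ)))]
        exact lintegral_mono fun x => edist_triangle _ _ _
    _ ≤ ENNReal.ofReal (ε / 2) + ENNReal.ofReal (ε / 2) := by
        rw [lintegral_add_left (f := fun σ => ∫⁻ x, edist (p σ x) (h (cell σ) x) ∂μ)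
          (hp.edist hgmeas).lintegral_prod_right']
        refine add_le_add hE (hθs.trans ?_)
        simpa only [edist_comm] using hE
    _ = ENNReal.ofReal ε := by
        rw [← ENNReal.ofReal_add (by positivity) (by positivity), add_halves]

end Approximation

lemma ConvexDens.exists_ae_eq_integral [MeasurableSpace X] [MeasurableSpace Θ] {μ : Measure X}
    [SigmaFinite μ] {p : Θ → X → ℝ} {A : Set Θ} (hconv : ConvexDens μ p A)
    (hclosed : ClosedDens μ p A) {ρ : Measure Θ} [IsProbabilityMeasure ρ] (hA : ∀ᵐ θ ∂ρ, θ ∈ A)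
    (hp : Measurable (Function.uncurry p)) (hpint : Integrable (Function.uncurry p) (ρ.prod μ)) :
    ∃ θ ∈ A, (fun x => ∫ σ, p σ x ∂ρ) =ᵐ[μ] p θ := by
  have hpσ (σ : Θ) : Measurable (p σ) := hp.comp measurable_prodMk_left
  have hmean : Integrable (fun x => ∫ σ, p σ x ∂ρ) μ := hpint.integral_prod_right
  refine hclosed _ hmean fun ε hε => ?_
  obtain ⟨ι, _, w, θs, hw, hw1, hθsA, hle⟩ :=
    exists_sum_lintegral_edist_integral_le hA hp hpint (half_pos hε)
  obtain ⟨θ, hθA, hθ⟩ : ∃ θ ∈ A, ∑ i, w i • p (θs i) =ᵐ[μ] p θ :=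
    hconv.convex.sum_mem (fun i _ => hw i) hw1 fun i _ => ⟨θs i, hθsA i, .rfl⟩
  refine ⟨θ, hθA, ?_⟩
  have hsum : Measurable (∑ i, w i • p (θs i)) := by fun_prop
  calc ∫ x, |∫ σ, p σ x ∂ρ - p θ x| ∂μ
      = (∫⁻ x, edist (∫ σ, p σ x ∂ρ) ((∑ i, w i • p (θs i)) x) ∂μ).toReal := by
        simp_rw [edist_eq_enorm_sub, ← Real.norm_eq_abs]
        rw [← integral_norm_eq_lintegral_enorm
          (f := fun x => ∫ σ, p σ x ∂ρ - (∑ i, w i • p (θs i)) x)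
          (hmean.aestronglyMeasurable.sub hsum.aestronglyMeasurable)]
        refine integral_congr_ae ?_
        filter_upwards [hθ] with x hx
        rw [hx]
    _ ≤ ε / 2 := ENNReal.toReal_le_of_le_ofReal (by positivity) hle
    _ < ε := half_lt_self hε

lemma integrable_uncurry_of_integral_eq_one [MeasurableSpace X] [MeasurableSpace Θ]
    {μ : Measure X} [SFinite μ] {ρ : Measure Θ} [IsFiniteMeasure ρ] {p : Θ → X → ℝ}
    (hp : Measurable (Function.uncurry p)) (hpnn : ∀ θ x, 0 ≤ p θ x)
    (hpint : ∀ θ, Integrable (p θ) μ) (hpone : ∀ θ, ∫ x, p θ x ∂μ = 1) :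
    Integrable (Function.uncurry p) (ρ.prod μ) := by
  refine (integrable_prod_iff hp.aestronglyMeasurable).2 ⟨ae_of_all _ hpint, ?_⟩
  simp only [Function.uncurry_apply_pair, Real.norm_of_nonneg (hpnn _ _), hpone]
  exact integrable_const 1

section Posterior

variable [MeasurableSpace Θ] (Pri : Measure Θ) (L : Θ → ℝ) (A : Set Θ)

/-- With `L = R_n` this is the posterior conditioned on `A`, `Πₙ(· ∣ A)`. -/
def posteriorOn : Measure Θ :=
  (Pri.restrict A).withDensity fun θ => ENNReal.ofReal (L θ / ∫ θ in A, L θ ∂Pri)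

variable {Pri L A}

lemma isProbabilityMeasure_posteriorOn (hL : ∀ θ, 0 ≤ L θ) (hpos : 0 < ∫ θ in A, L θ ∂Pri)
    (hint : IntegrableOn L A Pri) : IsProbabilityMeasure (posteriorOn Pri L A) := by
  constructor
  rw [posteriorOn, withDensity_apply _ MeasurableSet.univ, Measure.restrict_univ,
    ← ofReal_integral_eq_lintegral_ofReal (hint.div_const _)
      (ae_of_all _ fun θ => div_nonneg (hL θ) hpos.le),
    integral_div, div_self hpos.ne', ENNReal.ofReal_one]

lemma ae_mem_posteriorOn (hA : MeasurableSet A) : ∀ᵐ θ ∂posteriorOn Pri L A, θ ∈ A :=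
  (withDensity_absolutelyContinuous _ _).ae_le (ae_restrict_mem hA)

lemma integral_posteriorOn (hLmeas : Measurable L) (hL : ∀ θ, 0 ≤ L θ) (g : Θ → ℝ) :
    ∫ θ, g θ ∂posteriorOn Pri L A = (∫ θ in A, g θ * L θ ∂Pri) / ∫ θ in A, L θ ∂Pri := by
  rw [posteriorOn, ← integral_div]
  refine (integral_withDensity_eq_integral_smul (hLmeas.div_const _).real_toNNReal g).trans ?_
  refine integral_congr_ae (ae_of_all _ fun θ => ?_)
  dsimp only
  rw [NNReal.smul_def, Real.coe_toNNReal _ (div_nonneg (hL θ) (integral_nonneg hL)), smul_eq_mul]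
  ring

end Posterior

theorem statement_6_general
    {X Θ : Type*} [MeasurableSpace X] [MeasurableSpace Θ]
    (μ : Measure X) [SigmaFinite μ]
    (Pri : Measure Θ)
    (p : Θ → X → ℝ) (p₀ : X → ℝ) (θstar : Θ) (xs : ℕ → X)
    (α c : ℝ) (n : ℕ) (A : Set Θ)
    -- the model: jointly measurable family of probability densities w.r.t. μ
    (hpmeas : Measurable (Function.uncurry p))
    (hpnn : ∀ θ x, 0 ≤ p θ x)
    (hpint : ∀ θ, Integrable (p θ) μ)
    (hpone : ∀ θ, ∫ x, p θ x ∂μ = 1)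
    -- A is measurable and {p_θ : θ ∈ A} is convex and closed in L¹(μ)
    (hA : MeasurableSet A)
    (hconv : ConvexDens μ p A)
    (hclosed : ClosedDens μ p A)
    -- inf_{θ ∈ A} [-log ∫ (p_θ/p*)^α p₀ dμ] ≥ c
    (hentropy : ∀ θ ∈ A, c ≤ -Real.log (∫ x, (p θ x / p θstar x) ^ α * p₀ x ∂μ))
    -- 0 < ∫_A R_n dΠ < ∞ for the fixed realization xs of X₁, …, X_n
    (hpos : 0 < ∫ θ in A, LR p θstar xs n θ ∂Pri)
    (hint : IntegrableOn (LR p θstar xs n) A Pri) :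
    (∃ θ ∈ A, predDens Pri p θstar xs n A =ᵐ[μ] p θ) ∧
      ∫ x, (predDens Pri p θstar xs n A x / p θstar x) ^ α * p₀ x ∂μ ≤ Real.exp (-c) := by
  set L := LR p θstar xs n
  have hLmeas : Measurable L := Finset.measurable_prod _ fun i _ =>
    (hpmeas.comp (measurable_id.prodMk measurable_const)).div_const _
  have hLnn (θ : Θ) : 0 ≤ L θ := Finset.prod_nonneg fun i _ => div_nonneg (hpnn _ _) (hpnn _ _)
  have := isProbabilityMeasure_posteriorOn hLnn hpos hint
  have hpred : predDens Pri p θstar xs n A = fun x => ∫ θ, p θ x ∂posteriorOn Pri L A :=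
    funext fun x => (integral_posteriorOn hLmeas hLnn _).symm
  obtain ⟨θ, hθA, hθ⟩ := hconv.exists_ae_eq_integral hclosed (ae_mem_posteriorOn hA) hpmeas
    (integrable_uncurry_of_integral_eq_one (ρ := posteriorOn Pri L A) hpmeas hpnn hpint hpone)
  rw [hpred]
  refine ⟨⟨θ, hθA, hθ⟩, ?_⟩
  rw [integral_congr_ae (hθ.mono fun x hx => by rw [hx])]
  exact Real.le_exp_of_log_le (by linarith [hentropy θ hθA])

/-- If `{p_θ : θ ∈ A}` is convex and closed in L¹(μ) and
`inf_{θ ∈ A} [-log ∫ (p_θ/p*)^α p₀ dμ] ≥ c`, then the predictive density `p_{nA}` coincides a.e.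
with a density from `A`, and consequently `∫ (p_{nA}/p*)^α p₀ dμ ≤ e^{-c}`. -/
theorem statement_6
    {X Θ : Type*} [MeasurableSpace X] [MeasurableSpace Θ]
    (μ : Measure X) [SigmaFinite μ]
    (Pri : Measure Θ) [IsProbabilityMeasure Pri]
    (p : Θ → X → ℝ) (p₀ : X → ℝ) (θstar : Θ) (xs : ℕ → X)
    (α c : ℝ) (n : ℕ) (A : Set Θ)
    -- the model: jointly measurable family of probability densities w.r.t. μ
    (hpmeas : Measurable (Function.uncurry p))
    (hpnn : ∀ θ x, 0 ≤ p θ x)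
    (hpint : ∀ θ, Integrable (p θ) μ)
    (hpone : ∀ θ, ∫ x, p θ x ∂μ = 1)
    -- the true density p₀
    (hp₀meas : Measurable p₀) (hp₀nn : ∀ x, 0 ≤ p₀ x)
    (hp₀int : Integrable p₀ μ) (hp₀one : (∫ x, p₀ x ∂μ) = 1)
    (hα0 : 0 < α) (hα1 : α < 1) (hc : 0 ≤ c)
    -- A is measurable and {p_θ : θ ∈ A} is convex and closed in L¹(μ)
    (hA : MeasurableSet A)
    (hconv : ConvexDens μ p A)
    (hclosed : ClosedDens μ p A)
    -- inf_{θ ∈ A} [-log ∫ (p_θ/p*)^α p₀ dμ] ≥ c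
    (hentropy : ∀ θ ∈ A, c ≤ -Real.log (∫ x, (p θ x / p θstar x) ^ α * p₀ x ∂μ))
    -- 0 < ∫_A R_n dΠ < ∞ for the fixed realization xs of X₁, …, X_n
    (hpos : 0 < ∫ θ in A, LR p θstar xs n θ ∂Pri)
    (hint : IntegrableOn (LR p θstar xs n) A Pri) :
    (∃ θ ∈ A, predDens Pri p θstar xs n A =ᵐ[μ] p θ) ∧
      ∫ x, (predDens Pri p θstar xs n A x / p θstar x) ^ α * p₀ x ∂μ ≤ Real.exp (-c) :=
  statement_6_general μ Pri p p₀ θstar xs α c n A hpmeas hpnn hpint hpone hA hconv hclosed hentropy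
    hpos hint

end
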